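/- arXiv:1609.00738 — 4 statements merged into one kernel-verified Lean document; each statement's English description precedes it below -/
import Mathlib

section
/- Let L and M be modular lattices of finite length with an antitone Galois connection (.)° between them, and let rk_M denote the rank (height) function on M. Then the function deg_L(l) = rk_M(l°) is lower semimodular on L, i.e., deg_L(x) + deg_L(y) ≤ deg_L(x ∨ y) + deg_L(x ∧ y) for all x, y ∈ L. -/
/-! An antitone Galois connection `f ⊣ g` is a monotone Galois connection `L → Mᵒᵈ`, so `f` sends
joins to meets: `f (x ⊔ y) = f x ⊓ f y`; antitonicity alone gives `f x ⊔ f y ≤ f (x ⊓ y)`.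
Modularity of the height on `M` applied to `f x, f y` and monotonicity of the height then give the
inequality. -/

open OrderDual

theorem galoisConnection_toDual_comp_of_antitone {L M : Type*} [Preorder L] [Preorder M]
    {f : L → M} {g : M → L} (hf : Antitone f) (hg : Antitone g)
    (hgf : ∀ x : L, x ≤ g (f x)) (hfg : ∀ m : M, m ≤ f (g m)) :
    GaloisConnection (toDual ∘ f) (g ∘ ofDual) :=
  GaloisConnection.monotone_intro (fun _ _ h => hg h) (fun _ _ h => hf h) hgf hfg

theorem degree_of_galois_connection_lower_semimodular_general {L M : Type*}
    [Lattice L] [Lattice M]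
    (hrk_mod : ∀ x y : M,
      Order.height x + Order.height y = Order.height (x ⊔ y) + Order.height (x ⊓ y))
    (f : L → M) (g : M → L) (hf : Antitone f) (hg : Antitone g)
    (hgf : ∀ x : L, x ≤ g (f x)) (hfg : ∀ m : M, m ≤ f (g m))
    (x y : L) :
    Order.height (f x) + Order.height (f y)
      ≤ Order.height (f (x ⊔ y)) + Order.height (f (x ⊓ y)) := by
  have map_sup : f (x ⊔ y) = f x ⊓ f y :=
    (galoisConnection_toDual_comp_of_antitone hf hg hgf hfg).l_sup
  calc Order.height (f x) + Order.height (f y)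
      = Order.height (f x ⊓ f y) + Order.height (f x ⊔ f y) := by rw [hrk_mod, add_comm]
    _ ≤ Order.height (f (x ⊔ y)) + Order.height (f (x ⊓ y)) := by
        rw [map_sup]
        exact add_le_add_right (Order.height_mono (hf.le_map_inf x y)) _

/-- For modular lattices `L`, `M` of finite length with an antitone Galois
connection between them, the degree function `deg_L l = height (l°)` is lower
semimodular on `L`. -/
theorem degree_of_galois_connection_lower_semimodular {L M : Type*}
    [Lattice L] [Lattice M] [IsModularLattice L] [IsModularLattice M]
    (hLfin : ∀ x : L, Order.height x < ⊤)
    (hMfin : ∀ m : M, Order.height m < ⊤)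
    (hrk_mod : ∀ x y : M,
      Order.height x + Order.height y = Order.height (x ⊔ y) + Order.height (x ⊓ y))
    (f : L → M) (g : M → L) (hf : Antitone f) (hg : Antitone g)
    (hgf : ∀ x : L, x ≤ g (f x)) (hfg : ∀ m : M, m ≤ f (g m))
    (x y : L) :
    Order.height (f x) + Order.height (f y)
      ≤ Order.height (f (x ⊔ y)) + Order.height (f (x ⊓ y)) :=
  degree_of_galois_connection_lower_semimodular_general hrk_mod f g hf hg hgf hfg x y
end

section
/- (Wei duality for matroids) Let M be a matroid on a set E of size n with rank k, and M* its dual (of rank n−k). Define dᵢ(M) = min{|J| : J ⊆ E, h⁰(M,J) = i} for 1 ≤ i ≤ k, where h⁰(M,J) = r(E) − r(E\J). Then the sets {dᵢ(M) : 1 ≤ i ≤ k} and {n+1−dᵢ(M*) : 1 ≤ i ≤ n−k} are disjoint, hence partition {1,…,n}. -/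
/-- The rank of a subset `J`: the maximal cardinality of an independent subset of `J`. -/
def matroidRank {α : Type*} [DecidableEq α] (Indep : Finset α → Prop)
    [DecidablePred Indep] (J : Finset α) : ℕ :=
  (J.powerset.filter Indep).sup Finset.card

/-- `h⁰(M, J) = r(E) - r(E \ J)`. -/
def h0Matroid {α : Type*} [DecidableEq α] (E : Finset α) (Indep : Finset α → Prop)
    [DecidablePred Indep] (J : Finset α) : ℕ :=
  matroidRank Indep E - matroidRank Indep (E \ J)

/-- The rank function of the dual matroid: `r*(S) = |S| + r(E \ S) - r(E)`. -/
def dualMatroidRank {α : Type*} [DecidableEq α] (E : Finset α) (Indep : Finset α → Prop)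
    [DecidablePred Indep] (S : Finset α) : ℕ :=
  S.card + matroidRank Indep (E \ S) - matroidRank Indep E

/-- `h⁰(M*, J) = r*(E) - r*(E \ J)`. -/
def h0DualMatroid {α : Type*} [DecidableEq α] (E : Finset α) (Indep : Finset α → Prop)
    [DecidablePred Indep] (J : Finset α) : ℕ :=
  dualMatroidRank E Indep E - dualMatroidRank E Indep (E \ J)

/-- The `i`-th generalized weight of a matroid, defined from its `h⁰` function:
`dᵢ = min { |J| : J ⊆ E, h⁰(J) = i }`. -/
noncomputable def matroidWeight {α : Type*} (E : Finset α) (h0 : Finset α → ℕ)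
    (i : ℕ) : ℕ :=
  sInf {m : ℕ | ∃ J ⊆ E, J.card = m ∧ h0 J = i}

/-!
Both `h⁰(M, ·)` and `h⁰(M*, ·)` (which is the nullity `J ↦ |J| - r J`) are demi-matroid rank
functions: zero on `∅`, monotone, and growing by at most one per added element. For such an `h`
let `g m` be the maximum of `h` over `m`-subsets of `E`; the intermediate value property of `h`
shows that `dᵢ` is the least `m` with `i ≤ g m`, so `{dᵢ}` is the set of jumps of `g` in
`[1, n]`. Complementation gives `h⁰(M, J) + (n - k) = h⁰(M*, E \ J) + |J|`, hence
`g₁ m + (n - k) = g₂ (n - m) + m`; as all increments are `0` or `1`, `g₁` jumps at `m` exactly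
when `g₂` does not jump at `n + 1 - m`.
-/

open Finset

/-- The rank axioms of a demi-matroid (Britz–Johnsen–Mayhew–Shiromoto) on the subsets of `E`:
unlike a matroid rank function, no submodularity is required. -/
structure IsDemimatroidRank {α : Type*} [DecidableEq α] (E : Finset α) (r : Finset α → ℕ) :
    Prop where
  empty : r ∅ = 0
  mono : ∀ ⦃J J' : Finset α⦄, J ⊆ J' → J' ⊆ E → r J ≤ r J'
  insert_le : ∀ ⦃J : Finset α⦄ (x : α), insert x J ⊆ E → r (insert x J) ≤ r J + 1

namespace IsDemimatroidRank

variable {α : Type*} [DecidableEq α] {E : Finset α} {r s : Finset α → ℕ}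

theorem congr (hr : IsDemimatroidRank E r) (hrs : ∀ J ⊆ E, r J = s J) :
    IsDemimatroidRank E s where
  empty := hrs ∅ (empty_subset E) ▸ hr.empty
  mono J J' hJJ' hJ' := hrs J (hJJ'.trans hJ') ▸ hrs J' hJ' ▸ hr.mono hJJ' hJ'
  insert_le J x hxJ := by
    rw [← hrs _ hxJ, ← hrs J ((subset_insert x J).trans hxJ)]
    exact hr.insert_le x hxJ

theorem union_le_add_card (hr : IsDemimatroidRank E r) (J S : Finset α) (hJS : J ∪ S ⊆ E) :
    r (J ∪ S) ≤ r J + S.card := by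
  induction S using Finset.induction_on with
  | empty => simp
  | insert a S ha ih =>
    rw [union_insert] at hJS ⊢
    have hstep := hr.insert_le a hJS
    have := ih ((subset_insert a _).trans hJS)
    rw [card_insert_of_notMem ha]
    omega

theorem le_add_card_sdiff (hr : IsDemimatroidRank E r) {J J' : Finset α} (hJJ' : J ⊆ J')
    (hJ' : J' ⊆ E) : r J' ≤ r J + (J' \ J).card := by
  have := hr.union_le_add_card J (J' \ J) (by rwa [union_sdiff_of_subset hJJ'])
  rwa [union_sdiff_of_subset hJJ'] at this

theorem le_card (hr : IsDemimatroidRank E r) {J : Finset α} (hJ : J ⊆ E) : r J ≤ J.card := by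
  simpa [hr.empty] using hr.le_add_card_sdiff (empty_subset J) hJ

theorem supplement (hr : IsDemimatroidRank E r) :
    IsDemimatroidRank E fun J => r E - r (E \ J) where
  empty := by simp
  mono J J' hJJ' _ := by
    have := hr.mono (sdiff_subset_sdiff subset_rfl hJJ') sdiff_subset
    omega
  insert_le J x hxJ := by
    have hcover : E \ J ⊆ insert x (E \ insert x J) := by
      intro y hy
      by_cases hyx : y = x <;> simp_all
    have hxE : insert x (E \ insert x J) ⊆ E :=
      insert_subset (hxJ (mem_insert_self x J)) sdiff_subset
    have := hr.mono hcover hxE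
    have := hr.insert_le x hxE
    have := hr.mono (sdiff_subset (s := E) (t := J)) subset_rfl
    omega

theorem nullity (hr : IsDemimatroidRank E r) : IsDemimatroidRank E fun J => J.card - r J where
  empty := by simp
  mono J J' hJJ' hJ' := by
    have := hr.le_add_card_sdiff hJJ' hJ'
    have := card_sdiff_of_subset hJJ'
    have := card_le_card hJJ'
    omega
  insert_le J x hxJ := by
    have := hr.mono (subset_insert x J) hxJ
    have := card_insert_le x J
    omega

theorem exists_subset_eq (hr : IsDemimatroidRank E r) {J : Finset α} (hJ : J ⊆ E) {i : ℕ}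
    (hi : i ≤ r J) : ∃ J' ⊆ J, r J' = i := by
  induction J using Finset.induction_on generalizing i with
  | empty => exact ⟨∅, subset_rfl, by have := hr.empty; omega⟩
  | insert a J _ ih =>
    by_cases hiJ : i = r (insert a J)
    · exact ⟨insert a J, subset_rfl, hiJ.symm⟩
    · have := hr.insert_le a hJ
      obtain ⟨J', hJ'J, hJ'⟩ := ih (i := i) ((subset_insert a J).trans hJ) (by omega)
      exact ⟨J', hJ'J.trans (subset_insert a J), hJ'⟩

theorem supplement_add_card_sub (hr : IsDemimatroidRank E r) {J : Finset α} (hJ : J ⊆ E) :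
    r E - r (E \ J) + (E.card - r E) = (E \ J).card - r (E \ J) + J.card := by
  have := hr.mono (sdiff_subset (s := E) (t := J)) subset_rfl
  have := hr.le_card (subset_refl E)
  have := hr.le_card (sdiff_subset (s := E) (t := J))
  have := card_sdiff_of_subset hJ
  have := card_le_card hJ
  omega

end IsDemimatroidRank

def jumps (g : ℕ → ℕ) (N : ℕ) : Finset ℕ :=
  (Icc 1 N).filter fun m => g (m - 1) < g m

theorem image_sInf_eq_jumps {g : ℕ → ℕ} {N : ℕ} (hg0 : g 0 = 0)
    (hg : MonotoneOn g (Set.Iic N)) :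
    (Icc 1 (g N)).image (fun i => sInf {m | i ≤ g m}) = jumps g N := by
  ext m
  simp only [jumps, mem_image, mem_filter, mem_Icc]
  constructor
  · rintro ⟨i, ⟨hi1, hiN⟩, rfl⟩
    have hmem : i ≤ g (sInf {m | i ≤ g m}) := Nat.sInf_mem (s := {m | i ≤ g m}) ⟨N, hiN⟩
    have hle : sInf {m | i ≤ g m} ≤ N := Nat.sInf_le hiN
    have hpos : 1 ≤ sInf {m | i ≤ g m} := by
      by_contra! h0
      rw [Nat.lt_one_iff.mp h0, hg0] at hmem
      omega
    have hprev : g (sInf {m | i ≤ g m} - 1) < i := by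
      by_contra! h
      exact absurd (Nat.sInf_le (s := {m | i ≤ g m}) h) (by omega)
    exact ⟨⟨hpos, hle⟩, by omega⟩
  · rintro ⟨⟨hm1, hmN⟩, hjump⟩
    refine ⟨g m, ⟨by omega, hg hmN (Set.mem_Iic.mpr le_rfl) hmN⟩, ?_⟩
    have hm : m ∈ {m' | g m ≤ g m'} := le_refl (g m)
    refine le_antisymm (Nat.sInf_le hm) (le_csInf ⟨m, hm⟩ fun m' (hm' : g m ≤ g m') => ?_)
    by_contra! hlt
    have := hg (Set.mem_Iic.mpr (by omega : m' ≤ N)) (Set.mem_Iic.mpr (by omega : m - 1 ≤ N))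
      (by omega : m' ≤ m - 1)
    omega

theorem image_reflect_jumps {g₁ g₂ : ℕ → ℕ} {N c : ℕ}
    (hrel : ∀ m ≤ N, g₁ m + c = g₂ (N - m) + m) (hg₁ : MonotoneOn g₁ (Set.Iic N))
    (hstep : ∀ m < N, g₁ (m + 1) ≤ g₁ m + 1) :
    (jumps g₂ N).image (fun m => N + 1 - m) = Icc 1 N \ jumps g₁ N := by
  have key : ∀ m ∈ Icc 1 N, m ∈ jumps g₁ N ↔ N + 1 - m ∉ jumps g₂ N := by
    intro m hm
    rw [mem_Icc] at hm
    have h₁ := hrel m hm.2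
    have h₂ := hrel (m - 1) (by omega)
    have hmono := hg₁ (Set.mem_Iic.mpr (by omega : m - 1 ≤ N)) (Set.mem_Iic.mpr hm.2)
      (by omega : m - 1 ≤ m)
    have hunit := hstep (m - 1) (by omega)
    rw [show N - (m - 1) = N + 1 - m by omega] at h₂
    rw [show m - 1 + 1 = m by omega] at hunit
    simp only [jumps, mem_filter, mem_Icc, show N + 1 - m - 1 = N - m by omega]
    omega
  ext m
  simp only [mem_image, mem_sdiff]
  constructor
  · rintro ⟨m', hm', rfl⟩
    have hm'Icc : m' ∈ Icc 1 N := filter_subset _ _ hm'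
    have hm : N + 1 - m' ∈ Icc 1 N := by simp only [mem_Icc] at hm'Icc ⊢; omega
    rw [key _ hm, show N + 1 - (N + 1 - m') = m' by simp only [mem_Icc] at hm'Icc; omega]
    exact ⟨hm, not_not.mpr hm'⟩
  · rintro ⟨hm, hnot⟩
    rw [key _ hm, not_not] at hnot
    exact ⟨N + 1 - m, hnot, by simp only [mem_Icc] at hm; omega⟩

section MaxOfCard

variable {α : Type*} (E : Finset α) (r : Finset α → ℕ)

def maxOfCard (m : ℕ) : ℕ :=
  (E.powersetCard m).sup r

variable {E r}

theorem le_maxOfCard {J : Finset α} (hJ : J ⊆ E) : r J ≤ maxOfCard E r J.card :=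
  le_sup (mem_powersetCard.mpr ⟨hJ, rfl⟩)

theorem exists_eq_maxOfCard {m : ℕ} (hm : m ≤ E.card) :
    ∃ J ⊆ E, J.card = m ∧ r J = maxOfCard E r m := by
  obtain ⟨J, hJ, hJmax⟩ := exists_mem_eq_sup _ (powersetCard_nonempty.mpr hm) r
  exact ⟨J, (mem_powersetCard.mp hJ).1, (mem_powersetCard.mp hJ).2, hJmax.symm⟩

theorem maxOfCard_card : maxOfCard E r E.card = r E := by
  simp [maxOfCard, powersetCard_self]

theorem maxOfCard_add_eq_of_compl [DecidableEq α] {s : Finset α → ℕ} {m c d : ℕ}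
    (hm : m ≤ E.card) (hrs : ∀ J ⊆ E, J.card = m → r J + c = s (E \ J) + d) :
    maxOfCard E r m + c = maxOfCard E s (E.card - m) + d := by
  apply le_antisymm
  · obtain ⟨J, hJE, hJm, hJmax⟩ := exists_eq_maxOfCard (r := r) hm
    have hle := le_maxOfCard (r := s) (sdiff_subset (s := E) (t := J))
    rw [card_sdiff_of_subset hJE, hJm] at hle
    have := hrs J hJE hJm
    omega
  · obtain ⟨J, hJE, hJm, hJmax⟩ := exists_eq_maxOfCard (r := s) (Nat.sub_le E.card m)
    have hcard : (E \ J).card = m := by rw [card_sdiff_of_subset hJE, hJm]; omega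
    have hle := le_maxOfCard (r := r) (sdiff_subset (s := E) (t := J))
    have heq := hrs (E \ J) sdiff_subset hcard
    rw [hcard] at hle
    rw [Finset.sdiff_sdiff_eq_self hJE] at heq
    omega

variable [DecidableEq α] (hr : IsDemimatroidRank E r)
include hr

theorem IsDemimatroidRank.maxOfCard_zero : maxOfCard E r 0 = 0 := by
  simp [maxOfCard, hr.empty]

theorem IsDemimatroidRank.monotoneOn_maxOfCard :
    MonotoneOn (maxOfCard E r) (Set.Iic E.card) := by
  intro m _ m' hm' hmm'
  obtain ⟨J, hJE, hJm, hJmax⟩ := exists_eq_maxOfCard (r := r) (hmm'.trans hm')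
  obtain ⟨J', hJJ', hJ'E, hJ'm⟩ := exists_subsuperset_card_eq hJE (hJm.trans_le hmm') hm'
  calc maxOfCard E r m = r J := hJmax.symm
    _ ≤ r J' := hr.mono hJJ' hJ'E
    _ ≤ maxOfCard E r m' := hJ'm ▸ le_maxOfCard hJ'E

theorem IsDemimatroidRank.maxOfCard_succ_le {m : ℕ} (hm : m < E.card) :
    maxOfCard E r (m + 1) ≤ maxOfCard E r m + 1 := by
  obtain ⟨J, hJE, hJm, hJmax⟩ := exists_eq_maxOfCard (r := r) (m := m + 1) hm
  obtain ⟨x, hx⟩ := card_pos.mp (by omega : 0 < J.card)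
  have hstep := hr.insert_le x (by rwa [insert_erase hx])
  rw [insert_erase hx] at hstep
  have := le_maxOfCard (r := r) ((erase_subset x J).trans hJE)
  rw [card_erase_of_mem hx, hJm, Nat.add_sub_cancel] at this
  omega

theorem IsDemimatroidRank.matroidWeight_eq_sInf {i : ℕ} (hi : i ≤ r E) :
    matroidWeight E r i = sInf {m | i ≤ maxOfCard E r m} := by
  set m₀ := sInf {m | i ≤ maxOfCard E r m}
  have hiE : i ≤ maxOfCard E r E.card := maxOfCard_card (r := r) ▸ hi
  have hm₀ : i ≤ maxOfCard E r m₀ := Nat.sInf_mem (s := {m | i ≤ maxOfCard E r m}) ⟨E.card, hiE⟩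
  have hm₀E : m₀ ≤ E.card := Nat.sInf_le hiE
  obtain ⟨J, hJE, hJm, hJmax⟩ := exists_eq_maxOfCard (r := r) hm₀E
  obtain ⟨J', hJ'J, hJ'i⟩ := hr.exists_subset_eq hJE (i := i) (by omega)
  have hJ'E := hJ'J.trans hJE
  have hJ'card : J'.card = m₀ :=
    le_antisymm (hJm ▸ card_le_card hJ'J) (Nat.sInf_le (hJ'i ▸ le_maxOfCard hJ'E))
  have hmem : m₀ ∈ {m | ∃ J ⊆ E, J.card = m ∧ r J = i} := ⟨J', hJ'E, hJ'card, hJ'i⟩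
  refine le_antisymm (Nat.sInf_le hmem) (le_csInf ⟨m₀, hmem⟩ ?_)
  rintro _ ⟨K, hKE, rfl, hKi⟩
  exact Nat.sInf_le (hKi ▸ le_maxOfCard hKE)

theorem IsDemimatroidRank.image_matroidWeight :
    (Icc 1 (r E)).image (matroidWeight E r) = jumps (maxOfCard E r) E.card := by
  rw [← image_sInf_eq_jumps hr.maxOfCard_zero hr.monotoneOn_maxOfCard, maxOfCard_card]
  exact image_congr fun i hi => hr.matroidWeight_eq_sInf (mem_Icc.mp hi).2

end MaxOfCard

section Matroid

variable {α : Type*} [DecidableEq α] {Indep : Finset α → Prop} [DecidablePred Indep]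

theorem matroidRank_insert_le (h_mono : ∀ I I' : Finset α, I' ⊆ I → Indep I → Indep I')
    (x : α) (J : Finset α) : matroidRank Indep (insert x J) ≤ matroidRank Indep J + 1 := by
  refine Finset.sup_le fun I hI => ?_
  rw [mem_filter, mem_powerset] at hI
  have hIx : I.erase x ∈ J.powerset.filter Indep :=
    mem_filter.mpr
      ⟨mem_powerset.mpr (subset_insert_iff.mp hI.1), h_mono I _ (erase_subset x I) hI.2⟩
  have : (I.erase x).card ≤ matroidRank Indep J := le_sup hIx
  have := pred_card_le_card_erase (s := I) (a := x)
  omega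

theorem isDemimatroidRank_matroidRank
    (h_mono : ∀ I I' : Finset α, I' ⊆ I → Indep I → Indep I') (E : Finset α) :
    IsDemimatroidRank E (matroidRank Indep) where
  empty := by simp [matroidRank]
  mono _ _ hJJ' _ := sup_mono (filter_subset_filter _ (powerset_mono.mpr hJJ'))
  insert_le J x _ := matroidRank_insert_le h_mono x J

theorem h0DualMatroid_eq_card_sub_matroidRank
    (h_mono : ∀ I I' : Finset α, I' ⊆ I → Indep I → Indep I') {E J : Finset α} (hJ : J ⊆ E) :
    h0DualMatroid E Indep J = J.card - matroidRank Indep J := by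
  have hr := isDemimatroidRank_matroidRank h_mono E
  have := hr.le_add_card_sdiff hJ subset_rfl
  have := hr.le_card hJ
  have := card_le_card hJ
  have := card_sdiff_of_subset hJ
  unfold h0DualMatroid dualMatroidRank
  rw [Finset.sdiff_self, Finset.sdiff_sdiff_eq_self hJ, card_sdiff_of_subset hJ, hr.empty]
  omega

end Matroid

theorem wei_duality_matroid_general {α : Type*} [DecidableEq α]
    (E : Finset α) (Indep : Finset α → Prop) [DecidablePred Indep]
    (h_mono : ∀ I I' : Finset α, I' ⊆ I → Indep I → Indep I')
    (n k : ℕ) (hn : E.card = n) (hk : matroidRank Indep E = k) :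
    ((Finset.Icc 1 k).image (matroidWeight E (h0Matroid E Indep)) ∩
      (Finset.Icc 1 (n - k)).image
        (fun i => n + 1 - matroidWeight E (h0DualMatroid E Indep) i) = ∅) ∧
    ((Finset.Icc 1 k).image (matroidWeight E (h0Matroid E Indep)) ∪
      (Finset.Icc 1 (n - k)).image
        (fun i => n + 1 - matroidWeight E (h0DualMatroid E Indep) i)
      = Finset.Icc 1 n) := by
  have hr := isDemimatroidRank_matroidRank h_mono E
  have h₁ : IsDemimatroidRank E (h0Matroid E Indep) := hr.supplement
  have h₂ : IsDemimatroidRank E (h0DualMatroid E Indep) :=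
    hr.nullity.congr fun J hJ => (h0DualMatroid_eq_card_sub_matroidRank h_mono hJ).symm
  have h₁E : h0Matroid E Indep E = k := by simp [h0Matroid, hr.empty, hk]
  have h₂E : h0DualMatroid E Indep E = n - k := by
    rw [h0DualMatroid_eq_card_sub_matroidRank h_mono subset_rfl, hn, hk]
  have hrel : ∀ m ≤ n, maxOfCard E (h0Matroid E Indep) m + (n - k) =
      maxOfCard E (h0DualMatroid E Indep) (n - m) + m := fun m hm => by
    subst hn hk
    refine maxOfCard_add_eq_of_compl hm fun J hJ hJm => ?_
    rw [h0DualMatroid_eq_card_sub_matroidRank h_mono sdiff_subset, ← hJm]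
    exact hr.supplement_add_card_sub hJ
  have hdual :
      (Icc 1 (n - k)).image (fun i => n + 1 - matroidWeight E (h0DualMatroid E Indep) i) =
        Icc 1 n \ jumps (maxOfCard E (h0Matroid E Indep)) n := by
    calc _ = ((Icc 1 (n - k)).image (matroidWeight E (h0DualMatroid E Indep))).image
            (n + 1 - ·) := image_image.symm
      _ = (jumps (maxOfCard E (h0DualMatroid E Indep)) n).image (n + 1 - ·) := by
        rw [← h₂E, h₂.image_matroidWeight, hn]
      _ = _ := image_reflect_jumps hrel (hn ▸ h₁.monotoneOn_maxOfCard)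
        fun m hm => h₁.maxOfCard_succ_le (hn ▸ hm)
  rw [hdual, ← h₁E, h₁.image_matroidWeight, hn]
  exact ⟨inter_sdiff_self _ _, union_sdiff_of_subset (filter_subset _ _)⟩

/-- Wei duality for matroids: the sets `{dᵢ(M) : 1 ≤ i ≤ k}` and
`{n + 1 - dᵢ(M*) : 1 ≤ i ≤ n - k}` are disjoint and partition `{1, …, n}`. -/
theorem wei_duality_matroid {α : Type*} [DecidableEq α]
    (E : Finset α) (Indep : Finset α → Prop) [DecidablePred Indep]
    (h_subset_ground : ∀ I, Indep I → I ⊆ E)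
    (h_empty : Indep ∅)
    (h_mono : ∀ I I' : Finset α, I' ⊆ I → Indep I → Indep I')
    (h_exch : ∀ I₁ I₂ : Finset α, Indep I₁ → Indep I₂ → I₁.card < I₂.card →
      ∃ e ∈ I₂ \ I₁, Indep (insert e I₁))
    (n k : ℕ) (hn : E.card = n) (hk : matroidRank Indep E = k) :
    ((Finset.Icc 1 k).image (matroidWeight E (h0Matroid E Indep)) ∩
      (Finset.Icc 1 (n - k)).image
        (fun i => n + 1 - matroidWeight E (h0DualMatroid E Indep) i) = ∅) ∧
    ((Finset.Icc 1 k).image (matroidWeight E (h0Matroid E Indep)) ∪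
      (Finset.Icc 1 (n - k)).image
        (fun i => n + 1 - matroidWeight E (h0DualMatroid E Indep) i)
      = Finset.Icc 1 n) :=
  wei_duality_matroid_general E Indep h_mono n k hn hk
end

section
/- (Semistability of tensor products of codes) Let A ⊆ F^{n_A} and B ⊆ F^{n_B} be linear codes such that every nonzero subcode A' ⊆ A satisfies w(A') ≥ dim(A')·w(A)/dim(A), and similarly every nonzero subcode B' ⊆ B satisfies w(B') ≥ dim(B')·w(B)/dim(B). Then every nonzero subcode C ⊆ A ⊗ B satisfies w(C) ≥ dim(C)·w(A)w(B)/(dim(A)dim(B)). -/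
/-- The support of a linear code (subspace of `F^n`). -/
def codeSupp {F : Type*} [Field F] {n : ℕ} (C : Submodule F (Fin n → F)) : Set (Fin n) :=
  {i | ∃ c ∈ C, c i ≠ 0}

/-- The support size `w` of a linear code. -/
noncomputable def codeWt {F : Type*} [Field F] {n : ℕ} (C : Submodule F (Fin n → F)) : ℕ :=
  (codeSupp C).ncard

/-- The tensor product `A ⊗ B`, identified with the space of `nA × nB` matrices
all of whose columns are in `A` and all of whose rows are in `B`. -/
def codeTensor {F : Type*} [Field F] {nA nB : ℕ}
    (A : Submodule F (Fin nA → F)) (B : Submodule F (Fin nB → F)) :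
    Submodule F (Matrix (Fin nA) (Fin nB) F) where
  carrier := {m | (∀ j, (fun i => m i j) ∈ A) ∧ (∀ i, (fun j => m i j) ∈ B)}
  add_mem' := by
    intro a b ha hb
    exact ⟨fun j => A.add_mem (ha.1 j) (hb.1 j), fun i => B.add_mem (ha.2 i) (hb.2 i)⟩
  zero_mem' := ⟨fun j => A.zero_mem, fun i => B.zero_mem⟩
  smul_mem' := by
    intro r m hm
    exact ⟨fun j => A.smul_mem r (hm.1 j), fun i => B.smul_mem r (hm.2 i)⟩

/-- The linear map sending a matrix to its `j`-th column. -/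
def colProj {F : Type*} [Field F] {nA nB : ℕ} (j : Fin nB) :
    Matrix (Fin nA) (Fin nB) F →ₗ[F] (Fin nA → F) where
  toFun m := fun i => m i j
  map_add' := fun _ _ => rfl
  map_smul' := fun _ _ => rfl

/-- The support of a space of matrices: positions where some element is nonzero. -/
def matSupp {F : Type*} [Field F] {nA nB : ℕ}
    (C : Submodule F (Matrix (Fin nA) (Fin nB) F)) : Set (Fin nA × Fin nB) :=
  {p | ∃ m ∈ C, m p.1 p.2 ≠ 0}

/-- The support size of a space of matrices. -/
noncomputable def matWt {F : Type*} [Field F] {nA nB : ℕ}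
    (C : Submodule F (Matrix (Fin nA) (Fin nB) F)) : ℕ :=
  (matSupp C).ncard


/-!
Column by column, the support of `C ⊆ A ⊗ B` is the union of the supports of the column codes
`C_j ⊆ A`, so semistability of `A` gives `w(C) ≥ (w(A) / dim A) · ∑ⱼ dim C_j`. For the remaining
bound `∑ⱼ dim C_j ≥ dim C · w(B) / dim B`, pick a row `i` on which `C` does not vanish and pass to
`C' = C ∩ {row i = 0}`. The row code `R ⊆ B` of `C` at `i` has `dim C = dim C' + dim R`, and every
column `j ∈ supp R` loses a dimension, so the column sum drops by at least
`w(R) ≥ dim R · w(B) / dim B`; conclude by well-founded induction on `C`.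
-/

open Module

theorem Set.ncard_eq_sum_ite {α : Type*} [Fintype α] (s : Set α) [DecidablePred (· ∈ s)] :
    s.ncard = ∑ x, if x ∈ s then 1 else 0 := by
  simp [Finset.sum_boole, Set.ncard_eq_toFinset_card']

theorem Submodule.finrank_inf_ker_add_finrank_map {K V W : Type*} [DivisionRing K] [AddCommGroup V]
    [Module K V] [AddCommGroup W] [Module K W] [FiniteDimensional K V] (f : V →ₗ[K] W)
    (C : Submodule K V) :
    finrank K ↥(C ⊓ LinearMap.ker f) + finrank K ↥(C.map f) = finrank K C := by
  have h := LinearMap.finrank_range_add_finrank_ker (f.domRestrict C)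
  have hker : C.comap C.subtype ⊓ (LinearMap.ker f).comap C.subtype =
      (LinearMap.ker f).comap C.subtype := by
    rw [Submodule.comap_subtype_self, top_inf_eq]
  rw [LinearMap.range_domRestrict, LinearMap.ker_domRestrict, ← hker, ← Submodule.comap_inf,
    (Submodule.comapSubtypeEquivOfLe inf_le_left).finrank_eq] at h
  omega

section TensorCode

variable {F : Type*} [Field F] {nA nB : ℕ}

def rowProj (i : Fin nA) : Matrix (Fin nA) (Fin nB) F →ₗ[F] (Fin nB → F) where
  toFun m := m i
  map_add' _ _ := rfl
  map_smul' _ _ := rfl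

theorem codeWt_bot {n : ℕ} : codeWt (⊥ : Submodule F (Fin n → F)) = 0 := by
  simp [codeWt, codeSupp]

theorem finrank_mul_le_codeWt_of_semistable {n : ℕ} {A : Submodule F (Fin n → F)}
    (hA : ∀ A' : Submodule F (Fin n → F), A' ≤ A → A' ≠ ⊥ →
      (codeWt A' : ℝ) ≥ finrank F A' * codeWt A / finrank F A)
    {A' : Submodule F (Fin n → F)} (hA' : A' ≤ A) :
    (finrank F A' : ℝ) * (codeWt A / finrank F A) ≤ codeWt A' := by
  rcases eq_or_ne A' ⊥ with rfl | hne
  · simp [codeWt_bot]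
  · rw [← mul_div_assoc]
    exact hA A' hA' hne

theorem map_colProj_le_of_le_codeTensor {A : Submodule F (Fin nA → F)}
    {B : Submodule F (Fin nB → F)} {C : Submodule F (Matrix (Fin nA) (Fin nB) F)}
    (hC : C ≤ codeTensor A B) (j : Fin nB) : C.map (colProj j) ≤ A := by
  rintro _ ⟨m, hm, rfl⟩
  exact (hC hm).1 j

theorem map_rowProj_le_of_le_codeTensor {A : Submodule F (Fin nA → F)}
    {B : Submodule F (Fin nB → F)} {C : Submodule F (Matrix (Fin nA) (Fin nB) F)}
    (hC : C ≤ codeTensor A B) (i : Fin nA) : C.map (rowProj i) ≤ B := by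
  rintro _ ⟨m, hm, rfl⟩
  exact (hC hm).2 i

theorem mk_mem_matSupp_iff (C : Submodule F (Matrix (Fin nA) (Fin nB) F)) (i : Fin nA)
    (j : Fin nB) : (i, j) ∈ matSupp C ↔ i ∈ codeSupp (C.map (colProj j)) :=
  ⟨fun ⟨m, hm, hmij⟩ => ⟨_, ⟨m, hm, rfl⟩, hmij⟩, fun ⟨_, ⟨m, hm, rfl⟩, hmij⟩ => ⟨m, hm, hmij⟩⟩

theorem matWt_eq_sum_codeWt_map_colProj (C : Submodule F (Matrix (Fin nA) (Fin nB) F)) :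
    matWt C = ∑ j, codeWt (C.map (colProj j)) := by
  classical
  simp only [matWt, codeWt, Set.ncard_eq_sum_ite, Fintype.sum_prod_type_right, mk_mem_matSupp_iff]

theorem finrank_map_colProj_inf_ker_rowProj_lt {C : Submodule F (Matrix (Fin nA) (Fin nB) F)}
    {i : Fin nA} {j : Fin nB} (hj : j ∈ codeSupp (C.map (rowProj i))) :
    finrank F ↥((C ⊓ LinearMap.ker (rowProj i)).map (colProj j)) <
      finrank F ↥(C.map (colProj j)) := by
  obtain ⟨_, ⟨m, hm, rfl⟩, hmij⟩ := hj
  refine Submodule.finrank_lt_finrank_of_lt (lt_of_le_of_ne (Submodule.map_mono inf_le_left) ?_)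
  intro heq
  obtain ⟨m', hm', hcol⟩ := heq ▸ Submodule.mem_map_of_mem (f := colProj j) hm
  have hm'ij : m' i j = 0 := congrFun (LinearMap.mem_ker.mp hm'.2) j
  exact hmij (hm'ij ▸ (congrFun hcol i).symm)

theorem sum_finrank_map_colProj_inf_ker_add_codeWt_le
    (C : Submodule F (Matrix (Fin nA) (Fin nB) F)) (i : Fin nA) :
    ∑ j, finrank F ↥((C ⊓ LinearMap.ker (rowProj i)).map (colProj j)) +
        codeWt (C.map (rowProj i)) ≤ ∑ j, finrank F ↥(C.map (colProj j)) := by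
  classical
  rw [codeWt, Set.ncard_eq_sum_ite, ← Finset.sum_add_distrib]
  refine Finset.sum_le_sum fun j _ => ?_
  split_ifs with hj
  · exact finrank_map_colProj_inf_ker_rowProj_lt hj
  · exact Submodule.finrank_mono (Submodule.map_mono inf_le_left)

theorem exists_not_le_ker_rowProj {C : Submodule F (Matrix (Fin nA) (Fin nB) F)} (hC : C ≠ ⊥) :
    ∃ i, ¬ C ≤ LinearMap.ker (rowProj i) := by
  by_contra! h
  refine hC (eq_bot_iff.mpr fun m hm => ?_)
  ext i j
  exact congrFun (LinearMap.mem_ker.mp (h i hm)) j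

theorem finrank_mul_le_sum_finrank_map_colProj {B : Submodule F (Fin nB → F)} {μ : ℝ}
    (hB : ∀ B' : Submodule F (Fin nB → F), B' ≤ B → (finrank F B' : ℝ) * μ ≤ codeWt B')
    (C : Submodule F (Matrix (Fin nA) (Fin nB) F)) (hC : ∀ i, C.map (rowProj i) ≤ B) :
    (finrank F C : ℝ) * μ ≤ ∑ j, (finrank F ↥(C.map (colProj j)) : ℝ) := by
  induction C using WellFoundedLT.induction with
  | ind C ih =>
  rcases eq_or_ne C ⊥ with rfl | hC0
  · simp only [finrank_bot, Nat.cast_zero, zero_mul]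
    positivity
  obtain ⟨i, hi⟩ := exists_not_le_ker_rowProj hC0
  have hlt : C ⊓ LinearMap.ker (rowProj i) < C := inf_lt_left.mpr hi
  have hker := ih _ hlt fun i' => (Submodule.map_mono inf_le_left).trans (hC i')
  have hrow := hB _ (hC i)
  have hrank := Submodule.finrank_inf_ker_add_finrank_map (rowProj i) C
  have hpeel : ∑ j, (finrank F ↥((C ⊓ LinearMap.ker (rowProj i)).map (colProj j)) : ℝ) +
      codeWt (C.map (rowProj i)) ≤ ∑ j, (finrank F ↥(C.map (colProj j)) : ℝ) := by
    exact_mod_cast sum_finrank_map_colProj_inf_ker_add_codeWt_le C i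
  rw [← hrank, Nat.cast_add]
  linarith

end TensorCode

theorem tensor_semistable_general {F : Type*} [Field F] {nA nB : ℕ}
    (A : Submodule F (Fin nA → F)) (B : Submodule F (Fin nB → F))
    (hA : ∀ A' : Submodule F (Fin nA → F), A' ≤ A → A' ≠ ⊥ →
      (codeWt A' : ℝ) ≥ Module.finrank F A' * codeWt A / Module.finrank F A)
    (hB : ∀ B' : Submodule F (Fin nB → F), B' ≤ B → B' ≠ ⊥ →
      (codeWt B' : ℝ) ≥ Module.finrank F B' * codeWt B / Module.finrank F B)
    (C : Submodule F (Matrix (Fin nA) (Fin nB) F)) (hC : C ≤ codeTensor A B) :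
    (matWt C : ℝ) ≥ Module.finrank F C * (codeWt A * codeWt B) /
      (Module.finrank F A * Module.finrank F B) := by
  rw [ge_iff_le, matWt_eq_sum_codeWt_map_colProj, Nat.cast_sum]
  calc (finrank F C : ℝ) * (codeWt A * codeWt B) / (finrank F A * finrank F B)
      = (finrank F C * (codeWt B / finrank F B)) * (codeWt A / finrank F A) := by ring
    _ ≤ (∑ j, (finrank F ↥(C.map (colProj j)) : ℝ)) * (codeWt A / finrank F A) := by
      gcongr
      exact finrank_mul_le_sum_finrank_map_colProj
        (fun _ => finrank_mul_le_codeWt_of_semistable hB) C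
        (map_rowProj_le_of_le_codeTensor hC)
    _ = ∑ j, (finrank F ↥(C.map (colProj j)) : ℝ) * (codeWt A / finrank F A) := Finset.sum_mul ..
    _ ≤ ∑ j, (codeWt (C.map (colProj j)) : ℝ) := Finset.sum_le_sum fun j _ =>
      finrank_mul_le_codeWt_of_semistable hA (map_colProj_le_of_le_codeTensor hC j)

/-- Semistability is preserved by tensor products of codes: if every nonzero
subcode `A' ⊆ A` satisfies `w(A') ≥ dim A' · w(A) / dim A`, and similarly for
`B`, then every nonzero subcode `C ⊆ A ⊗ B` satisfies
`w(C) ≥ dim C · w(A) w(B) / (dim A · dim B)`. -/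
theorem tensor_semistable {F : Type*} [Field F] {nA nB : ℕ}
    (A : Submodule F (Fin nA → F)) (B : Submodule F (Fin nB → F))
    (hA : ∀ A' : Submodule F (Fin nA → F), A' ≤ A → A' ≠ ⊥ →
      (codeWt A' : ℝ) ≥ Module.finrank F A' * codeWt A / Module.finrank F A)
    (hB : ∀ B' : Submodule F (Fin nB → F), B' ≤ B → B' ≠ ⊥ →
      (codeWt B' : ℝ) ≥ Module.finrank F B' * codeWt B / Module.finrank F B)
    (C : Submodule F (Matrix (Fin nA) (Fin nB) F)) (hC : C ≤ codeTensor A B)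
    (hC0 : C ≠ ⊥) :
    (matWt C : ℝ) ≥ Module.finrank F C * (codeWt A * codeWt B) /
      (Module.finrank F A * Module.finrank F B) :=
  tensor_semistable_general A B hA hB C hC
end

section
/- (Schaathun's bound, key lemma) Let A ⊆ F^{n_A}, B ⊆ F^{n_B} be linear codes of dimensions k_A, k_B, and C ⊆ A ⊗ B a subcode. For 1 ≤ i ≤ k_A set J_i = {j ∈ [n_B] : dim(π̂_j(C)) ≥ i} and t_i = dim(B ∩ F^{J_i}). Then Σ_{i=1}^{k_A} t_i ≥ dim(C). -/
/-- The subspace `F^J ⊆ F^n` of vectors supported in `J`. -/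
def coordSubspace (F : Type*) [Field F] {n : ℕ} (S : Set (Fin n)) :
    Submodule F (Fin n → F) where
  carrier := {x | ∀ i ∉ S, x i = 0}
  add_mem' := by
    intro a b ha hb i hi
    simp [ha i hi, hb i hi]
  zero_mem' := by intro i _; rfl
  smul_mem' := by
    intro r x hx i hi
    simp [hx i hi]

/-!
Induction on `dim C`. Let `j₀` be a column of least positive column rank `d`, and let
`C' = C ∩ {column j₀ = 0}`, so `dim C' = dim C - d`. Column ranks only drop when passing to `C'`,
so `J_i(C') ⊆ J_i(C)`. For `i ≤ d`, a row of a codeword of `C` that is nonzero at `j₀` lies in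
`B ∩ F^{J_i(C)}` (by minimality of `d` its support is in `J_i(C)`) but not in
`B ∩ F^{J_i(C')}` (since `j₀ ∉ J_i(C')`), so each of `t_1, …, t_d` exceeds its value for `C'`.
-/

open Module

theorem Submodule.finrank_map_add_finrank_inf_ker {K V W : Type*} [DivisionRing K]
    [AddCommGroup V] [Module K V] [AddCommGroup W] [Module K W]
    (f : V →ₗ[K] W) (p : Submodule K V) [FiniteDimensional K p] :
    finrank K (p.map f) + finrank K ↥(p ⊓ LinearMap.ker f) = finrank K p := by
  rw [← LinearMap.range_domRestrict, ← (f.domRestrict p).finrank_range_add_finrank_ker,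
    LinearMap.ker_domRestrict, ← Submodule.map_comap_subtype,
    ← (p.equivSubtypeMap _).finrank_eq]

theorem Finset.sum_Icc_one_ite_le {d k : ℕ} (h : d ≤ k) :
    ∑ i ∈ Finset.Icc 1 k, (if i ≤ d then 1 else 0) = d := by
  rw [Finset.sum_boole, Nat.cast_id, show (Finset.Icc 1 k).filter (· ≤ d) = Finset.Icc 1 d by
    ext i; simp only [Finset.mem_filter, Finset.mem_Icc]; omega]
  simp

theorem coordSubspace_mono {F : Type*} [Field F] {n : ℕ} {S T : Set (Fin n)} (h : S ⊆ T) :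
    coordSubspace F S ≤ coordSubspace F T :=
  fun _ hx i hi => hx i (fun hiS => hi (h hiS))

namespace Schaathun

variable {F : Type*} [Field F] {nA nB : ℕ}

/-- `dim π̂_j(C)`. -/
noncomputable abbrev colRank (C : Submodule F (Matrix (Fin nA) (Fin nB) F)) (j : Fin nB) : ℕ :=
  finrank F (C.map (colProj j))

/-- `B ∩ F^{J_i}`, whose dimension is `t_i`. -/
def levelCode (B : Submodule F (Fin nB → F)) (C : Submodule F (Matrix (Fin nA) (Fin nB) F))
    (i : ℕ) : Submodule F (Fin nB → F) :=
  B ⊓ coordSubspace F {j | i ≤ colRank C j}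

variable {B : Submodule F (Fin nB → F)} {C D : Submodule F (Matrix (Fin nA) (Fin nB) F)}

theorem colRank_mono (h : D ≤ C) (j : Fin nB) : colRank D j ≤ colRank C j :=
  Submodule.finrank_mono (Submodule.map_mono h)

theorem colRank_inf_ker_self (j : Fin nB) : colRank (C ⊓ LinearMap.ker (colProj j)) j = 0 :=
  Submodule.finrank_eq_zero.2 (eq_bot_iff.2 (Submodule.map_le_iff_le_comap.2 inf_le_right))

theorem colRank_add_finrank_inf_ker (C : Submodule F (Matrix (Fin nA) (Fin nB) F)) (j : Fin nB) :
    colRank C j + finrank F ↥(C ⊓ LinearMap.ker (colProj j)) = finrank F C := by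
  show finrank F (C.map (colProj j)) + _ = _
  -- applied to `colProj j` directly, unifying the instance paths unfolds `colProj` and times out
  generalize (colProj j : Matrix (Fin nA) (Fin nB) F →ₗ[F] (Fin nA → F)) = f
  exact Submodule.finrank_map_add_finrank_inf_ker f C

theorem levelCode_mono (h : D ≤ C) (i : ℕ) : levelCode B D i ≤ levelCode B C i :=
  inf_le_inf_left B (coordSubspace_mono fun j hj => le_trans hj (colRank_mono h j))

theorem exists_ne_zero_of_colRank_pos {j : Fin nB} (hj : 0 < colRank C j) :
    ∃ m ∈ C, ∃ s, m s j ≠ 0 := by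
  obtain ⟨_, ⟨m, hm, rfl⟩, hne⟩ :=
    Submodule.exists_mem_ne_zero_of_ne_bot (Submodule.one_le_finrank_iff.1 hj)
  exact ⟨m, hm, Function.ne_iff.1 hne⟩

theorem colRank_pos_of_ne_zero {m : Matrix (Fin nA) (Fin nB) F} (hm : m ∈ C) {s : Fin nA}
    {j : Fin nB} (h : m s j ≠ 0) : 0 < colRank C j := by
  refine Submodule.one_le_finrank_iff.2 fun hbot => h ?_
  have : colProj j m ∈ C.map (colProj j) := Submodule.mem_map_of_mem hm
  rw [hbot, Submodule.mem_bot] at this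
  exact congrFun this s

theorem eq_bot_of_colRank_eq_zero (h : ∀ j, colRank C j = 0) : C = ⊥ :=
  (Submodule.eq_bot_iff C).2 fun m hm => Matrix.ext fun s j => by
    by_contra hne
    exact (colRank_pos_of_ne_zero hm hne).ne' (h j)

theorem levelCode_inf_ker_lt (hB : ∀ m ∈ C, ∀ s, m s ∈ B) {j₀ : Fin nB}
    (hmin : ∀ j, 0 < colRank C j → colRank C j₀ ≤ colRank C j) {i : ℕ} (hi : 1 ≤ i)
    (hij : i ≤ colRank C j₀) :
    levelCode B (C ⊓ LinearMap.ker (colProj j₀)) i < levelCode B C i := by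
  obtain ⟨m, hm, s, hs⟩ := exists_ne_zero_of_colRank_pos (C := C) (j := j₀) (by omega)
  refine SetLike.lt_iff_le_and_exists.2 ⟨levelCode_mono inf_le_left i, m s,
    Submodule.mem_inf.2 ⟨hB m hm s, ?_⟩, ?_⟩
  · intro j hj
    by_contra hne
    exact hj (hij.trans (hmin j (colRank_pos_of_ne_zero hm hne)))
  · intro hmem
    refine hs ((Submodule.mem_inf.1 hmem).2 j₀ ?_)
    show ¬i ≤ colRank (C ⊓ LinearMap.ker (colProj j₀)) j₀
    rw [colRank_inf_ker_self]
    omega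

theorem finrank_le_sum_finrank_levelCode (hB : ∀ m ∈ C, ∀ s, m s ∈ B) {k : ℕ}
    (hk : ∀ j, colRank C j ≤ k) :
    finrank F C ≤ ∑ i ∈ Finset.Icc 1 k, finrank F (levelCode B C i) := by
  induction h : finrank F C using Nat.strong_induction_on generalizing C with
  | _ n ih =>
  by_cases hzero : ∀ j, colRank C j = 0
  · rw [← h, eq_bot_of_colRank_eq_zero hzero, finrank_bot]
    exact Nat.zero_le _
  push Not at hzero
  obtain ⟨j₀, hj₀, hmin⟩ := Finset.exists_min_image (Finset.univ.filter (0 < colRank C ·))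
    (colRank C) (by simpa [Finset.Nonempty, Nat.pos_iff_ne_zero] using hzero)
  simp only [Finset.mem_filter, Finset.mem_univ, true_and] at hj₀ hmin
  set C' := C ⊓ LinearMap.ker (colProj j₀)
  have hsplit : colRank C j₀ + finrank F C' = n := h ▸ colRank_add_finrank_inf_ker C j₀
  have hC' : finrank F C' ≤ ∑ i ∈ Finset.Icc 1 k, finrank F (levelCode B C' i) :=
    ih _ (by omega) (fun m hm => hB m hm.1) (fun j => (colRank_mono inf_le_left j).trans (hk j))
      rfl
  calc n = finrank F C' + colRank C j₀ := by omega
    _ ≤ ∑ i ∈ Finset.Icc 1 k, finrank F (levelCode B C' i)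
          + ∑ i ∈ Finset.Icc 1 k, (if i ≤ colRank C j₀ then 1 else 0) := by
      rw [Finset.sum_Icc_one_ite_le (hk j₀)]
      exact Nat.add_le_add_right hC' _
    _ ≤ ∑ i ∈ Finset.Icc 1 k, finrank F (levelCode B C i) := by
      rw [← Finset.sum_add_distrib]
      refine Finset.sum_le_sum fun i hi => ?_
      split_ifs with hij
      · exact Submodule.finrank_lt_finrank_of_lt
          (levelCode_inf_ker_lt hB hmin (Finset.mem_Icc.1 hi).1 hij)
      · exact Submodule.finrank_mono (levelCode_mono inf_le_left i)

end Schaathun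

theorem schaathun_key_lemma_general {F : Type*} [Field F] {nA nB : ℕ}
    (A : Submodule F (Fin nA → F)) (B : Submodule F (Fin nB → F))
    (kA : ℕ) (hkA : Module.finrank F A = kA)
    (C : Submodule F (Matrix (Fin nA) (Fin nB) F)) (hC : C ≤ codeTensor A B) :
    Module.finrank F C ≤
      ∑ i ∈ Finset.Icc 1 kA,
        Module.finrank F ↥(B ⊓ coordSubspace F
          {j : Fin nB | i ≤ Module.finrank F ↥(C.map (colProj j))}) := by
  refine Schaathun.finrank_le_sum_finrank_levelCode (fun m hm => (hC hm).2) fun j => ?_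
  rw [← hkA]
  exact Submodule.finrank_mono (Submodule.map_le_iff_le_comap.2 fun m hm => (hC hm).1 j)

/-- Schaathun's key lemma: with `J_i = {j : dim π̂_j(C) ≥ i}` and
`t_i = dim (B ∩ F^{J_i})`, one has `∑_{i=1}^{k_A} t_i ≥ dim C`. -/
theorem schaathun_key_lemma {F : Type*} [Field F] {nA nB : ℕ}
    (A : Submodule F (Fin nA → F)) (B : Submodule F (Fin nB → F))
    (kA kB : ℕ) (hkA : Module.finrank F A = kA) (hkB : Module.finrank F B = kB)
    (C : Submodule F (Matrix (Fin nA) (Fin nB) F)) (hC : C ≤ codeTensor A B) :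
    Module.finrank F C ≤
      ∑ i ∈ Finset.Icc 1 kA,
        Module.finrank F ↥(B ⊓ coordSubspace F
          {j : Fin nB | i ≤ Module.finrank F ↥(C.map (colProj j))}) :=
  schaathun_key_lemma_general A B kA hkA C hC
end
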